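/- arXiv:2403.07502 — 2 statements merged into one kernel-verified Lean document; each statement's English description precedes it below -/
import Mathlib

section
/- Let V satisfy the Assumption, let M = sup{|∂ₓ^α V(t,x)| : (t,x) ∈ ℝ^{1+n}, |α| = 2}, and fix 0 < T < min{1, π/√M}. With the boundary-value solutions (x^{(1)}, ξ^{(1)}) (with x^{(1)}(0) = y, x^{(1)}(t) = x), the initial-value solutions (x^{(2)}, ξ^{(2)}) (with x^{(2)}(t) = x′, ξ^{(2)}(t) = ξ), h(s;t,x′,ξ) = (1/2)|ξ^{(2)}(s)|² + V(s, x^{(2)}(s)) − ∇ₓV(s, x^{(2)}(s)) · x^{(2)}(s), the phase φ(t,x,y,x′,ξ) = −∫₀ᵗ h(s;t,x′,ξ) ds − y·ξ^{(2)}(0;t,x′,ξ) + x·ξ, and the action S(t,x,y) = ∫₀ᵗ { (1/2)|ξ^{(1)}(s)|² − V(s, x^{(1)}(s)) } ds, there exist C > 0 and a function r₁(t,x,y,x′,ξ) such that φ(t,x,y,x′,ξ) = S(t,x,y) − (1/(2t)) | (x − x′) − (y − x^{(2)}(0;t,x′,ξ)) |² + t · r₁(t,x,y,x′,ξ) and |r₁(t,x,y,x′,ξ)|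 ≤ C ( |x − x′|² + |y − x^{(2)}(0;t,x′,ξ)|² ) for all 0 < t < T and x, y, x′, ξ ∈ ℝⁿ. -/
open MeasureTheory
open scoped Real

/-- The Assumption on the potential `V`: for every fixed `t`, `V(t,·) ∈ C²(ℝⁿ)`;
the spatial derivatives of order `≤ 2` are (jointly) continuous in `(t,x)`;
and the second spatial derivative is uniformly bounded. -/
def PotAssumption (n : ℕ) (V : ℝ → EuclideanSpace ℝ (Fin n) → ℝ) : Prop :=
  (∀ t, ContDiff ℝ 2 (V t)) ∧
  (Continuous fun p : ℝ × EuclideanSpace ℝ (Fin n) => V p.1 p.2) ∧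
  (Continuous fun p : ℝ × EuclideanSpace ℝ (Fin n) => fderiv ℝ (V p.1) p.2) ∧
  (Continuous fun p : ℝ × EuclideanSpace ℝ (Fin n) => iteratedFDeriv ℝ 2 (V p.1) p.2) ∧
  (∃ C > 0, ∀ t x, ‖iteratedFDeriv ℝ 2 (V t) x‖ ≤ C)

open Set InnerProductSpace
open scoped RealInnerProductSpace

lemma no_interior_min {f f' : ℝ → ℝ} {L α β s₀ : ℝ}
    (hf : ∀ s, HasDerivAt f (f' s) s) (hf' : HasDerivAt f' L s₀) (hL : L < 0)
    (hs : s₀ ∈ Set.Ioo α β) (hmin : ∀ s ∈ Set.Icc α β, f s₀ ≤ f s) : False := by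
  have hloc : IsLocalMin f s₀ :=
    Filter.eventually_of_mem (Ioo_mem_nhds hs.1 hs.2) fun s hs' =>
      hmin s (Set.Ioo_subset_Icc_self hs')
  have h0 : f' s₀ = 0 := hloc.hasDerivAt_eq_zero (hf s₀)
  have hslope := hasDerivAt_iff_tendsto_slope.1 hf'
  have hev : ∀ᶠ s in nhdsWithin s₀ {s₀}ᶜ, slope f' s₀ s < 0 :=
    hslope.eventually_lt_const hL
  have hev2 : ∀ᶠ s in nhdsWithin s₀ (Set.Ioi s₀), f' s < 0 := by
    have hmono : nhdsWithin s₀ (Set.Ioi s₀) ≤ nhdsWithin s₀ {s₀}ᶜ :=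
      nhdsWithin_mono s₀ (fun s hs' => ne_of_gt hs')
    filter_upwards [hev.filter_mono hmono, self_mem_nhdsWithin] with s h1 h2
    have hpos : (0:ℝ) < s - s₀ := sub_pos.2 h2
    have heq : slope f' s₀ s = f' s / (s - s₀) := by
      rw [slope_def_field, h0, sub_zero]
    rw [heq] at h1
    rcases div_neg_iff.1 h1 with ⟨_, h⟩ | ⟨h, _⟩
    · linarith
    · exact h
  obtain ⟨u, hu, hsub⟩ := mem_nhdsGT_iff_exists_Ioo_subset.1 hev2
  -- interval (s₀, m) with m ≤ β, m ≤ u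
  set m : ℝ := min ((s₀ + u) / 2) ((s₀ + β) / 2) with hm
  have hs₀u : s₀ < u := hu
  have hms₀ : s₀ < m := by
    apply lt_min <;> [skip; skip] <;> linarith [hs.2]
  have hmu : m < u := by
    have : (s₀ + u)/2 < u := by linarith
    exact lt_of_le_of_lt (min_le_left _ _) this
  have hmβ : m < β := by
    have : (s₀ + β)/2 < β := by linarith [hs.2]
    exact lt_of_le_of_lt (min_le_right _ _) this
  have hanti : StrictAntiOn f (Set.Icc s₀ m) := by
    apply strictAntiOn_of_deriv_neg (convex_Icc _ _)
    · exact fun s _ => (hf s).continuousAt.continuousWithinAt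
    · intro s hsi
      rw [interior_Icc] at hsi
      rw [(hf s).deriv]
      exact hsub ⟨hsi.1, lt_trans hsi.2 hmu⟩
  have h1 : f m < f s₀ :=
    hanti (Set.left_mem_Icc.2 hms₀.le) (Set.right_mem_Icc.2 hms₀.le) hms₀
  have h2 : f s₀ ≤ f m := hmin m ⟨by linarith [hs.1], hmβ.le⟩
  linarith

variable {E : Type*} [NormedAddCommGroup E] [InnerProductSpace ℝ E]

lemma sturm_bound {β t M : ℝ} (hβ : 0 < β) (ht : 0 < t) (hβt : β * t < π) (hM0 : 0 ≤ M)
    (hMβ : M < β ^ 2) {z w g : ℝ → E}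
    (hzw : ∀ s, HasDerivAt z (w s) s) (hwg : ∀ s, HasDerivAt w (g s) s)
    (hg : ∀ s ∈ Set.Icc 0 t, ‖g s‖ ≤ M * ‖z s‖) :
    ∀ s ∈ Set.Icc 0 t, ‖z s‖ ≤ max ‖z 0‖ ‖z t‖ / Real.cos (β * t / 2) := by
  set c₀ : ℝ := Real.cos (β * t / 2) with hc₀
  have hβt2 : β * t / 2 < π / 2 := by linarith
  have hβt0 : 0 ≤ β * t / 2 := by positivity
  have hc₀pos : 0 < c₀ := Real.cos_pos_of_mem_Ioo ⟨by linarith [Real.pi_pos], hβt2⟩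
  set p : ℝ → ℝ := fun s => Real.cos (β * (s - t / 2)) with hp_def
  have hθ : ∀ s : ℝ, HasDerivAt (fun s : ℝ => β * (s - t / 2)) β s := fun s => by
    simpa using ((hasDerivAt_id s).sub_const (t / 2)).const_mul β
  set p' : ℝ → ℝ := fun s => -Real.sin (β * (s - t / 2)) * β with hp'_def
  have hp : ∀ s, HasDerivAt p (p' s) s := fun s => (hθ s).cos
  have hp' : ∀ s, HasDerivAt p' (-(β ^ 2) * p s) s := fun s => by
    have := ((hθ s).sin.neg).mul_const β
    refine this.congr_deriv ?_
    simp [hp_def]; ring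
  have hp_lb : ∀ s ∈ Set.Icc 0 t, c₀ ≤ p s := by
    intro s hs
    have habs : |β * (s - t / 2)| ≤ β * t / 2 := by
      rw [abs_mul, abs_of_pos hβ]
      have : |s - t / 2| ≤ t / 2 := abs_le.2 ⟨by linarith [hs.1], by linarith [hs.2]⟩
      nlinarith
    have : Real.cos (β * t / 2) ≤ Real.cos |β * (s - t / 2)| :=
      Real.cos_le_cos_of_nonneg_of_le_pi (abs_nonneg _) (by linarith [Real.pi_pos]) habs
    rwa [Real.cos_abs] at this
  have hp_pos : ∀ s ∈ Set.Icc 0 t, 0 < p s := fun s hs => lt_of_lt_of_le hc₀pos (hp_lb s hs)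
  have hp_le1 : ∀ s, p s ≤ 1 := fun s => Real.cos_le_one _
  have hzc : Continuous z := continuous_iff_continuousAt.2 fun s => (hzw s).continuousAt
  have hpc : Continuous p := Real.continuous_cos.comp (by continuity)
  set F : ℝ → ℝ := fun s => ‖z s‖ / p s with hF_def
  have hFcont : ContinuousOn F (Set.Icc 0 t) :=
    (hzc.norm.continuousOn).div hpc.continuousOn fun s hs => ne_of_gt (hp_pos s hs)
  obtain ⟨s₀, hs₀, hmax⟩ :=
    isCompact_Icc.exists_isMaxOn (Set.nonempty_Icc.2 ht.le) hFcont
  have hmax' : ∀ s ∈ Set.Icc 0 t, ‖z s‖ / p s ≤ F s₀ := fun s hs => hmax hs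
  set K := F s₀ with hK_def
  have hK0 : 0 ≤ K := div_nonneg (norm_nonneg _) (hp_pos s₀ hs₀).le
  have hKz : ∀ s ∈ Set.Icc 0 t, ‖z s‖ ≤ K * p s := fun s hs =>
    (div_le_iff₀ (hp_pos s hs)).1 (hmax' s hs)
  have hp0 : p 0 = c₀ := by
    simp only [hp_def]
    rw [show β * (0 - t / 2) = -(β * t / 2) by ring, Real.cos_neg]
  have hpt : p t = c₀ := by
    simp only [hp_def]
    rw [show β * (t - t / 2) = β * t / 2 by ring]
  suffices hKle : K ≤ max ‖z 0‖ ‖z t‖ / c₀ by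
    intro s hs
    calc ‖z s‖ ≤ K * p s := hKz s hs
      _ ≤ K * 1 := by nlinarith [hp_le1 s, hp_pos s hs]
      _ = K := mul_one K
      _ ≤ _ := hKle
  by_cases hz0 : ‖z s₀‖ = 0
  · have : K = 0 := by rw [hK_def, hF_def]; simp [hz0]
    rw [this]
    exact div_nonneg (le_trans (norm_nonneg _) (le_max_left _ _)) hc₀pos.le
  have hz0pos : 0 < ‖z s₀‖ := lt_of_le_of_ne (norm_nonneg _) (Ne.symm hz0)
  rcases eq_or_lt_of_le hs₀.1 with h0eq | h0lt
  · have h1 : K = ‖z 0‖ / p 0 := by rw [h0eq]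
    rw [h1, hp0]
    exact (div_le_div_iff_of_pos_right hc₀pos).2 (le_max_left _ _)
  rcases eq_or_lt_of_le hs₀.2 with hteq | hlt_t
  · have h1 : K = ‖z t‖ / p t := by rw [← hteq]
    rw [h1, hpt]
    exact (div_le_div_iff_of_pos_right hc₀pos).2 (le_max_right _ _)
  -- interior case: contradiction
  exfalso
  set u : E := ‖z s₀‖⁻¹ • z s₀ with hu_def
  have hu_norm : ‖u‖ = 1 := by
    rw [hu_def, norm_smul, norm_inv, norm_norm]
    field_simp
  have hKp : K * p s₀ = ‖z s₀‖ := div_mul_cancel₀ _ (ne_of_gt (hp_pos s₀ hs₀))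
  set f : ℝ → ℝ := fun s => K * p s - ⟪u, z s⟫ with hf_def
  set f' : ℝ → ℝ := fun s => K * p' s - ⟪u, w s⟫ with hf'_def
  have hfd : ∀ s, HasDerivAt f (f' s) s := by
    intro s
    have h2 : HasDerivAt (fun s => ⟪u, z s⟫) (⟪u, w s⟫) s := by
      simpa using (hasDerivAt_const s u).inner ℝ (hzw s)
    exact ((hp s).const_mul K).sub h2
  have hfd' : HasDerivAt f' (K * (-(β ^ 2) * p s₀) - ⟪u, g s₀⟫) s₀ := by
    have h2 : HasDerivAt (fun s => ⟪u, w s⟫) (⟪u, g s₀⟫) s₀ := by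
      simpa using (hasDerivAt_const s₀ u).inner ℝ (hwg s₀)
    exact ((hp' s₀).const_mul K).sub h2
  have hL : K * (-(β ^ 2) * p s₀) - ⟪u, g s₀⟫ < 0 := by
    have h1 : |⟪u, g s₀⟫| ≤ ‖g s₀‖ := by
      calc |⟪u, g s₀⟫| ≤ ‖u‖ * ‖g s₀‖ := abs_real_inner_le_norm u (g s₀)
        _ = ‖g s₀‖ := by rw [hu_norm, one_mul]
    have h2 : ‖g s₀‖ ≤ M * ‖z s₀‖ := hg s₀ hs₀
    have h3 : K * (-(β ^ 2) * p s₀) = -(β ^ 2) * ‖z s₀‖ := by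
      rw [show K * (-(β ^ 2) * p s₀) = -(β ^ 2) * (K * p s₀) by ring, hKp]
    rw [h3]
    have := abs_le.1 h1
    nlinarith
  have hmin : ∀ s ∈ Set.Icc 0 t, f s₀ ≤ f s := by
    intro s hs
    have h1 : ⟪u, z s₀⟫ = ‖z s₀‖ := by
      rw [hu_def, real_inner_smul_left, real_inner_self_eq_norm_sq]
      field_simp
    have h2 : f s₀ = 0 := by rw [hf_def]; simp only; rw [h1, hKp, sub_self]
    have h3 : ⟪u, z s⟫ ≤ ‖z s‖ := by
      calc ⟪u, z s⟫ ≤ ‖u‖ * ‖z s‖ := real_inner_le_norm u (z s)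
        _ = ‖z s‖ := by rw [hu_norm, one_mul]
    have h4 : 0 ≤ f s := by
      rw [hf_def]; simp only
      have := hKz s hs
      linarith
    linarith
  exact no_interior_min hfd hfd' hL ⟨h0lt, hlt_t⟩ hmin

variable [CompleteSpace E]

lemma gradient_def' (f : E → ℝ) (x : E) : gradient f x = (toDual ℝ E).symm (fderiv ℝ f x) := rfl

lemma fderiv_inner_gradient (f : E → ℝ) (x v : E) : fderiv ℝ f x v = ⟪gradient f x, v⟫ := by
  rw [gradient_def']
  rw [show (⟪(toDual ℝ E).symm (fderiv ℝ f x), v⟫ : ℝ)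
      = (toDual ℝ E) ((toDual ℝ E).symm (fderiv ℝ f x)) v from rfl]
  rw [LinearIsometryEquiv.apply_symm_apply]

lemma ftc' {F : Type*} [NormedAddCommGroup F] [NormedSpace ℝ F] [CompleteSpace F] {G G' : ℝ → F}
    (h : ∀ s, HasDerivAt G (G' s) s) (hc : Continuous G') (a b : ℝ) :
    ∫ s in a..b, G' s = G b - G a :=
  intervalIntegral.integral_eq_sub_of_hasDerivAt (fun s _ => h s) (hc.intervalIntegrable a b)

lemma grad_lip {f : E → ℝ} (hf : ContDiff ℝ 2 f) {M : ℝ}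
    (hM : ∀ x, ‖iteratedFDeriv ℝ 2 f x‖ ≤ M) (p q : E) :
    ‖gradient f p - gradient f q‖ ≤ M * ‖p - q‖ := by
  have hnorm : ∀ x : E, ‖fderiv ℝ (fderiv ℝ f) x‖ = ‖iteratedFDeriv ℝ 2 f x‖ := by
    intro x
    calc ‖fderiv ℝ (fderiv ℝ f) x‖ = ‖iteratedFDeriv ℝ 0 (fderiv ℝ (fderiv ℝ f)) x‖ :=
          by rw [norm_iteratedFDeriv_zero]
      _ = ‖iteratedFDeriv ℝ 1 (fderiv ℝ f) x‖ := norm_iteratedFDeriv_fderiv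
      _ = ‖iteratedFDeriv ℝ 2 f x‖ := norm_iteratedFDeriv_fderiv
  have hdiff : ∀ x : E, DifferentiableAt ℝ (fderiv ℝ f) x := fun x =>
    ((hf.fderiv_right (m := 1) (by norm_num)).differentiable (by norm_num)).differentiableAt
  have key : ‖fderiv ℝ f p - fderiv ℝ f q‖ ≤ M * ‖p - q‖ := by
    have := convex_univ.norm_image_sub_le_of_norm_fderiv_le (f := fderiv ℝ f)
      (fun x _ => hdiff x) (fun x _ => by rw [hnorm]; exact hM x)
      (Set.mem_univ q) (Set.mem_univ p)
    exact this
  calc ‖gradient f p - gradient f q‖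
      = ‖(toDual ℝ E).symm (fderiv ℝ f p - fderiv ℝ f q)‖ := by
        rw [gradient_def', gradient_def', ← LinearIsometryEquiv.map_sub]
    _ = ‖fderiv ℝ f p - fderiv ℝ f q‖ := LinearIsometryEquiv.norm_map _ _
    _ ≤ M * ‖p - q‖ := key

lemma taylor_bound {f : E → ℝ} (hf : ContDiff ℝ 2 f) {M : ℝ} (hM0 : 0 ≤ M)
    (hlip : ∀ p q : E, ‖gradient f p - gradient f q‖ ≤ M * ‖p - q‖) (p q : E) :
    |f p - f q - ⟪gradient f q, p - q⟫| ≤ M * ‖p - q‖ ^ 2 := by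
  set d := p - q with hd
  set G : ℝ → ℝ := fun u => f (q + u • d) - u * ⟪gradient f q, d⟫ with hG
  set G' : ℝ → ℝ := fun u => ⟪gradient f (q + u • d), d⟫ - ⟪gradient f q, d⟫ with hG'
  have hline : ∀ u : ℝ, HasDerivAt (fun u : ℝ => q + u • d) d u := fun u => by
    simpa using ((hasDerivAt_id u).smul_const d).const_add q
  have hder : ∀ u : ℝ, HasDerivAt G (G' u) u := by
    intro u
    have h1 : HasDerivAt (fun u : ℝ => f (q + u • d)) (fderiv ℝ f (q + u • d) d) u :=
      (hf.differentiable (by norm_num) _).hasFDerivAt.comp_hasDerivAt u (hline u)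
    rw [fderiv_inner_gradient] at h1
    exact (h1.sub ((hasDerivAt_id u).mul_const (⟪gradient f q, d⟫ : ℝ))).congr_deriv (by simp [hG'])
  have hbound : ∀ u ∈ Set.Ico (0:ℝ) 1, ‖G' u‖ ≤ M * ‖d‖ ^ 2 := by
    intro u hu
    have h1 : G' u = ⟪gradient f (q + u • d) - gradient f q, d⟫ := by
      rw [hG', inner_sub_left]
    rw [Real.norm_eq_abs, h1]
    calc |⟪gradient f (q + u • d) - gradient f q, d⟫|
        ≤ ‖gradient f (q + u • d) - gradient f q‖ * ‖d‖ := abs_real_inner_le_norm _ _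
      _ ≤ (M * ‖u • d‖) * ‖d‖ := by
          have := hlip (q + u • d) q
          simp only [add_sub_cancel_left] at this
          exact mul_le_mul_of_nonneg_right this (norm_nonneg _)
      _ ≤ M * ‖d‖ ^ 2 := by
          rw [norm_smul, Real.norm_eq_abs, abs_of_nonneg hu.1]
          nlinarith [norm_nonneg d, hu.1, hu.2, sq_nonneg ‖d‖,
            mul_nonneg (mul_nonneg hM0 (norm_nonneg d)) (norm_nonneg d)]
  have := norm_image_sub_le_of_norm_deriv_le_segment_01'
    (f := G) (f' := G') (fun u _ => (hder u).hasDerivWithinAt) hbound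
  have hG1 : G 1 = f p - ⟪gradient f q, d⟫ := by simp [hG, hd]
  have hG0 : G 0 = f q := by simp [hG]
  rw [hG1, hG0] at this
  rw [Real.norm_eq_abs] at this
  calc |f p - f q - ⟪gradient f q, p - q⟫| = |f p - ⟪gradient f q, d⟫ - f q| := by
        rw [hd]; ring_nf
    _ ≤ M * ‖d‖ ^ 2 := this



lemma max_sq_le {na nb : ℝ} : (max nb na) ^ 2 ≤ na ^ 2 + nb ^ 2 := by
  rcases max_cases nb na with ⟨h1, _⟩ | ⟨h1, _⟩ <;> rw [h1] <;> nlinarith [sq_nonneg na, sq_nonneg nb]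

lemma arith_final {Mv Bc tv cv na nb : ℝ} (hM0 : 0 ≤ Mv) (hBc0 : 0 ≤ Bc) (ht0 : 0 < tv)
    (ht1 : tv < 1) (hcpos : 0 < cv) (hBc2 : Bc ^ 2 ≤ (na ^ 2 + nb ^ 2) / cv ^ 2) :
    Mv * Bc ^ 2 + Mv ^ 2 * Bc ^ 2 * tv ^ 2 / 2
      ≤ ((Mv + Mv ^ 2 / 2) / cv ^ 2 + 1) * (na ^ 2 + nb ^ 2) := by
  have ht2 : tv ^ 2 ≤ 1 := by nlinarith
  have hsum : (0:ℝ) ≤ na ^ 2 + nb ^ 2 := by positivity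
  calc Mv * Bc ^ 2 + Mv ^ 2 * Bc ^ 2 * tv ^ 2 / 2
      ≤ (Mv + Mv ^ 2 / 2) * Bc ^ 2 := by
        nlinarith [mul_nonneg (mul_nonneg (sq_nonneg Mv) (sq_nonneg Bc)) ht0.le,
          mul_nonneg (sq_nonneg Mv) (sq_nonneg Bc)]
    _ ≤ (Mv + Mv ^ 2 / 2) * ((na ^ 2 + nb ^ 2) / cv ^ 2) :=
        mul_le_mul_of_nonneg_left hBc2 (by nlinarith [sq_nonneg Mv])
    _ = (Mv + Mv ^ 2 / 2) / cv ^ 2 * (na ^ 2 + nb ^ 2) := by ring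
    _ ≤ ((Mv + Mv ^ 2 / 2) / cv ^ 2 + 1) * (na ^ 2 + nb ^ 2) := by nlinarith

set_option maxHeartbeats 4000000 in
/-- Under the Assumption, with `M = sup |∂ₓ²V|` and
`0 < T < min{1, π/√M}`: for the boundary-value solution `(x⁽¹⁾, ξ⁽¹⁾)`
(`x⁽¹⁾(0) = y`, `x⁽¹⁾(t) = x`), the initial-value solution `(x⁽²⁾, ξ⁽²⁾)`
(`x⁽²⁾(t) = x′`, `ξ⁽²⁾(t) = ξ`),
`h(s) = ½|ξ⁽²⁾(s)|² + V(s,x⁽²⁾(s)) − ∇ₓV(s,x⁽²⁾(s))·x⁽²⁾(s)`, the phase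
`φ = −∫₀ᵗ h ds − y·ξ⁽²⁾(0) + x·ξ` and the action
`S(t,x,y) = ∫₀ᵗ {½|ξ⁽¹⁾(s)|² − V(s,x⁽¹⁾(s))} ds`, there exist `C > 0` and `r₁` with
`φ = S − (1/(2t))|(x−x′) − (y−x⁽²⁾(0))|² + t·r₁` and
`|r₁| ≤ C (|x−x′|² + |y−x⁽²⁾(0)|²)` for all `0 < t < T` and `x, y, x′, ξ`. -/
theorem stmt_11 (n : ℕ) (V : ℝ → EuclideanSpace ℝ (Fin n) → ℝ) (hV : PotAssumption n V)
    (M : ℝ)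
    (hM : M = ⨆ p : ℝ × EuclideanSpace ℝ (Fin n), ‖iteratedFDeriv ℝ 2 (V p.1) p.2‖)
    (T : ℝ) (hT : 0 < T) (hT1 : T < 1) (hTM : T * Real.sqrt M < π) :
    ∃ C > 0, ∀ t ∈ Set.Ioo (0 : ℝ) T, ∀ x y x' ξ : EuclideanSpace ℝ (Fin n),
      ∀ x1 ξ1 x2 ξ2 : ℝ → EuclideanSpace ℝ (Fin n),
        (∀ s, HasDerivAt x1 (ξ1 s) s ∧ HasDerivAt ξ1 (-(gradient (V s) (x1 s))) s) →
        x1 0 = y → x1 t = x →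
        (∀ s, HasDerivAt x2 (ξ2 s) s ∧ HasDerivAt ξ2 (-(gradient (V s) (x2 s))) s) →
        x2 t = x' → ξ2 t = ξ →
        ∃ r₁ : ℝ,
          (-(∫ s in (0 : ℝ)..t, ((1 / 2) * ‖ξ2 s‖ ^ 2 + V s (x2 s)
                - (inner ℝ (gradient (V s) (x2 s)) (x2 s) : ℝ)))
              - (inner ℝ y (ξ2 0) : ℝ) + (inner ℝ x ξ : ℝ)
            = (∫ s in (0 : ℝ)..t, ((1 / 2) * ‖ξ1 s‖ ^ 2 - V s (x1 s)))
              - (2 * t)⁻¹ * ‖(x - x') - (y - x2 0)‖ ^ 2 + t * r₁) ∧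
          |r₁| ≤ C * (‖x - x'‖ ^ 2 + ‖y - x2 0‖ ^ 2) := by
  obtain ⟨hV1, hVc, hVfd, hVit, C₂, hC₂pos, hC₂⟩ := hV
  have hub : ∀ (s : ℝ) (v : EuclideanSpace ℝ (Fin n)),
      ‖iteratedFDeriv ℝ 2 (V s) v‖ ≤ M := by
    intro s v
    rw [hM]
    exact le_ciSup ⟨C₂, by rintro r ⟨p, rfl⟩; exact hC₂ p.1 p.2⟩ (s, v)
  have hM0 : 0 ≤ M := le_trans (norm_nonneg _) (hub 0 0)
  have hlip : ∀ (s : ℝ) (p q : EuclideanSpace ℝ (Fin n)),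
      ‖gradient (V s) p - gradient (V s) q‖ ≤ M * ‖p - q‖ :=
    fun s => grad_lip (hV1 s) (hub s)
  have htay : ∀ (s : ℝ) (p q : EuclideanSpace ℝ (Fin n)),
      |V s p - V s q - ⟪gradient (V s) q, p - q⟫| ≤ M * ‖p - q‖ ^ 2 :=
    fun s => taylor_bound (hV1 s) hM0 (hlip s)
  have hpi := Real.pi_pos
  have hsM := Real.sqrt_nonneg M
  set β : ℝ := (Real.sqrt M * T + π) / (2 * T) with hβ_def
  have h2T : (0:ℝ) < 2 * T := by linarith
  have hβpos : 0 < β := div_pos (by nlinarith) h2T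
  have hβT : β * T < π := by
    rw [hβ_def, div_mul_eq_mul_div, div_lt_iff₀ h2T]
    nlinarith
  have hsqrtβ : Real.sqrt M < β := by
    rw [hβ_def, lt_div_iff₀ h2T]
    nlinarith
  have hMβ : M < β ^ 2 := by
    nlinarith [Real.sq_sqrt hM0]
  set c : ℝ := Real.cos (β * T / 2) with hc_def
  have hβT2 : 0 < β * T := mul_pos hβpos hT
  have hcpos : 0 < c := Real.cos_pos_of_mem_Ioo ⟨by linarith, by linarith⟩
  have hc1 : c ≤ 1 := Real.cos_le_one _
  have hCpos : 0 < (M + M ^ 2 / 2) / c ^ 2 + 1 := by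
    have h1 : (0:ℝ) ≤ (M + M ^ 2 / 2) / c ^ 2 :=
      div_nonneg (by nlinarith) (by positivity)
    linarith
  refine ⟨(M + M ^ 2 / 2) / c ^ 2 + 1, hCpos, ?_⟩
  rintro t ⟨ht0, htT⟩ x y x' ξ x1 ξ1 x2 ξ2 hx1 hx10 hx1t hx2 hx2t hξ2t
  have htne : t ≠ 0 := ne_of_gt ht0
  have ht1 : t < 1 := lt_trans htT hT1
  set a : EuclideanSpace ℝ (Fin n) := x - x' with ha_def
  set b : EuclideanSpace ℝ (Fin n) := y - x2 0 with hb_def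
  set z : ℝ → EuclideanSpace ℝ (Fin n) := fun s => x1 s - x2 s with hz_def
  set w : ℝ → EuclideanSpace ℝ (Fin n) := fun s => ξ1 s - ξ2 s with hw_def
  set gw : ℝ → EuclideanSpace ℝ (Fin n) :=
    fun s => gradient (V s) (x2 s) - gradient (V s) (x1 s) with hgw_def
  set R : ℝ → ℝ :=
    fun s => V s (x1 s) - V s (x2 s) - ⟪gradient (V s) (x2 s), z s⟫ with hR_def
  set e : ℝ → EuclideanSpace ℝ (Fin n) := fun s => w s - t⁻¹ • (a - b) with he_def
  -- derivatives
  have hzd : ∀ s, HasDerivAt z (w s) s := fun s => (hx1 s).1.sub (hx2 s).1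
  have hwd : ∀ s, HasDerivAt w (gw s) s := by
    intro s
    have h := (hx1 s).2.sub (hx2 s).2
    have he2 : -(gradient (V s) (x1 s)) - -(gradient (V s) (x2 s)) = gw s := by
      simp only [hgw_def]; abel
    rwa [he2] at h
  -- continuity
  have cx1 : Continuous x1 := continuous_iff_continuousAt.2 fun s => (hx1 s).1.continuousAt
  have cξ1 : Continuous ξ1 := continuous_iff_continuousAt.2 fun s => (hx1 s).2.continuousAt
  have cx2 : Continuous x2 := continuous_iff_continuousAt.2 fun s => (hx2 s).1.continuousAt
  have cξ2 : Continuous ξ2 := continuous_iff_continuousAt.2 fun s => (hx2 s).2.continuousAt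
  have cg2 : Continuous fun s => gradient (V s) (x2 s) := by
    have h1 : Continuous fun s : ℝ => fderiv ℝ (V s) (x2 s) :=
      hVfd.comp (continuous_id.prodMk cx2)
    exact ((toDual ℝ (EuclideanSpace ℝ (Fin n))).symm.continuous.comp h1 : _)
  have cg1 : Continuous fun s => gradient (V s) (x1 s) := by
    have h1 : Continuous fun s : ℝ => fderiv ℝ (V s) (x1 s) :=
      hVfd.comp (continuous_id.prodMk cx1)
    exact ((toDual ℝ (EuclideanSpace ℝ (Fin n))).symm.continuous.comp h1 : _)
  have cgw : Continuous gw := cg2.sub cg1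
  have cV1 : Continuous fun s => V s (x1 s) := hVc.comp (continuous_id.prodMk cx1)
  have cV2 : Continuous fun s => V s (x2 s) := hVc.comp (continuous_id.prodMk cx2)
  have cz : Continuous z := cx1.sub cx2
  have cw : Continuous w := cξ1.sub cξ2
  have cR : Continuous R := (cV1.sub cV2).sub (cg2.inner cz)
  have ce : Continuous e := cw.sub continuous_const
  have hz0 : z 0 = b := by simp only [hz_def, hx10, hb_def]
  have hzt : z t = a := by simp only [hz_def, hx1t, hx2t, ha_def]
  -- Identity I
  have hI1 : ∫ s in (0:ℝ)..t, (‖ξ2 s‖ ^ 2 - ⟪gradient (V s) (x2 s), x2 s⟫)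
      = ⟪x', ξ⟫ - ⟪x2 0, ξ2 0⟫ := by
    have h := ftc' (G := fun s => ⟪x2 s, ξ2 s⟫)
      (G' := fun s => ‖ξ2 s‖ ^ 2 - ⟪gradient (V s) (x2 s), x2 s⟫) ?_ ?_ 0 t
    · rw [h, hx2t, hξ2t]
    · intro s
      have h' := (hx2 s).1.inner ℝ (hx2 s).2
      refine h'.congr_deriv ?_
      rw [inner_neg_right, real_inner_self_eq_norm_sq, real_inner_comm]
      ring
    · exact ((cξ2.inner cξ2).congr (fun s => by rw [real_inner_self_eq_norm_sq])).sub
        (cg2.inner cx2)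
  -- step A : rewrite the h-integral
  have hIh : (∫ s in (0:ℝ)..t, ((1 / 2) * ‖ξ2 s‖ ^ 2 + V s (x2 s)
        - (inner ℝ (gradient (V s) (x2 s)) (x2 s) : ℝ)))
      = -(∫ s in (0:ℝ)..t, ((1 / 2) * ‖ξ2 s‖ ^ 2 - V s (x2 s)))
        + (⟪x', ξ⟫ - ⟪x2 0, ξ2 0⟫) := by
    have hsplit : (∫ s in (0:ℝ)..t, ((1 / 2) * ‖ξ2 s‖ ^ 2 + V s (x2 s)
        - (inner ℝ (gradient (V s) (x2 s)) (x2 s) : ℝ)))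
        = ∫ s in (0:ℝ)..t, (-((1 / 2) * ‖ξ2 s‖ ^ 2 - V s (x2 s))
            + (‖ξ2 s‖ ^ 2 - ⟪gradient (V s) (x2 s), x2 s⟫)) := by
      apply intervalIntegral.integral_congr
      intro s _
      simp only
      ring
    rw [hsplit, intervalIntegral.integral_add
      (f := fun s => -((1 / 2) * ‖ξ2 s‖ ^ 2 - V s (x2 s)))
      (g := fun s => ‖ξ2 s‖ ^ 2 - ⟪gradient (V s) (x2 s), x2 s⟫)
      ((((continuous_const.mul (cξ2.norm.pow 2)).sub cV2).neg).intervalIntegrable 0 t)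
      ((((cξ2.norm.pow 2).congr (fun s => rfl)).sub (cg2.inner cx2)).intervalIntegrable 0 t),
      intervalIntegral.integral_neg, hI1]
  -- Identity II (middle boundary term)
  have hI2 : ∫ s in (0:ℝ)..t, (⟪ξ2 s, w s⟫ - ⟪gradient (V s) (x2 s), z s⟫)
      = ⟪ξ, a⟫ - ⟪ξ2 0, b⟫ := by
    have h := ftc' (G := fun s => ⟪ξ2 s, z s⟫)
      (G' := fun s => ⟪ξ2 s, w s⟫ - ⟪gradient (V s) (x2 s), z s⟫) ?_ ?_ 0 t
    · rw [h, hz0, hzt, hξ2t]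
    · intro s
      have h' := (hx2 s).2.inner ℝ (hzd s)
      refine h'.congr_deriv ?_
      rw [inner_neg_left]
      ring
    · exact (cξ2.inner cw).sub (cg2.inner cz)
  -- Step B : decompose the action integral
  have hIS : (∫ s in (0:ℝ)..t, ((1 / 2) * ‖ξ1 s‖ ^ 2 - V s (x1 s)))
      = (∫ s in (0:ℝ)..t, ((1 / 2) * ‖ξ2 s‖ ^ 2 - V s (x2 s)))
        + (⟪ξ, a⟫ - ⟪ξ2 0, b⟫)
        + ∫ s in (0:ℝ)..t, ((1 / 2) * ‖w s‖ ^ 2 - R s) := by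
    have hpt : ∀ s : ℝ, (1 / 2) * ‖ξ1 s‖ ^ 2 - V s (x1 s)
        = (((1 / 2) * ‖ξ2 s‖ ^ 2 - V s (x2 s))
          + (⟪ξ2 s, w s⟫ - ⟪gradient (V s) (x2 s), z s⟫))
          + ((1 / 2) * ‖w s‖ ^ 2 - R s) := by
      intro s
      have h1 : ξ1 s = ξ2 s + w s := by simp [hw_def]
      simp only [hR_def, hz_def]
      rw [h1, norm_add_sq_real]
      ring
    rw [intervalIntegral.integral_congr (g := fun s =>
        ((((1 / 2) * ‖ξ2 s‖ ^ 2 - V s (x2 s))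
          + (⟪ξ2 s, w s⟫ - ⟪gradient (V s) (x2 s), z s⟫))
          + ((1 / 2) * ‖w s‖ ^ 2 - R s))) (fun s _ => hpt s)]
    rw [intervalIntegral.integral_add
      (f := fun s => ((1 / 2) * ‖ξ2 s‖ ^ 2 - V s (x2 s))
        + (⟪ξ2 s, w s⟫ - ⟪gradient (V s) (x2 s), z s⟫))
      (g := fun s => (1 / 2) * ‖w s‖ ^ 2 - R s)
      ((((continuous_const.mul (cξ2.norm.pow 2)).sub cV2).add
        ((cξ2.inner cw).sub (cg2.inner cz))).intervalIntegrable 0 t)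
      (((continuous_const.mul (cw.norm.pow 2)).sub cR).intervalIntegrable 0 t),
      intervalIntegral.integral_add
      (f := fun s => (1 / 2) * ‖ξ2 s‖ ^ 2 - V s (x2 s))
      (g := fun s => ⟪ξ2 s, w s⟫ - ⟪gradient (V s) (x2 s), z s⟫)
      (((continuous_const.mul (cξ2.norm.pow 2)).sub cV2).intervalIntegrable 0 t)
      (((cξ2.inner cw).sub (cg2.inner cz)).intervalIntegrable 0 t), hI2]
  -- Step C : the |w|^2 integral
  have hwv : ∫ s in (0:ℝ)..t, ⟪w s, t⁻¹ • (a - b)⟫ = t⁻¹ * ‖a - b‖ ^ 2 := by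
    have h := ftc' (G := fun s => ⟪z s, t⁻¹ • (a - b)⟫)
      (G' := fun s => ⟪w s, t⁻¹ • (a - b)⟫) ?_ ?_ 0 t
    · rw [h, hz0, hzt, ← inner_sub_left, real_inner_smul_right,
        real_inner_self_eq_norm_sq]
    · intro s
      have h' := (hzd s).inner ℝ (hasDerivAt_const s (t⁻¹ • (a - b)))
      refine h'.congr_deriv ?_
      simp
    · exact cw.inner continuous_const
  have hnv : ‖t⁻¹ • (a - b)‖ ^ 2 = t⁻¹ ^ 2 * ‖a - b‖ ^ 2 := by
    rw [norm_smul, mul_pow, Real.norm_eq_abs, sq_abs]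
  have hIC : ∫ s in (0:ℝ)..t, ((1 / 2) * ‖w s‖ ^ 2 - R s)
      = (((2 * t)⁻¹ * ‖a - b‖ ^ 2 + (∫ s in (0:ℝ)..t, ‖e s‖ ^ 2) / 2)
        - ∫ s in (0:ℝ)..t, R s) := by
    have hpt : ∀ s : ℝ, (1 / 2) * ‖w s‖ ^ 2 - R s
        = (((1 / 2) * ‖e s‖ ^ 2 + (⟪w s, t⁻¹ • (a - b)⟫ - (1 / 2) * ‖t⁻¹ • (a - b)‖ ^ 2))
          - R s) := by
      intro s
      have h1 : w s = e s + t⁻¹ • (a - b) := by simp [he_def]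
      have h2 : ⟪e s, t⁻¹ • (a - b)⟫
          = ⟪w s, t⁻¹ • (a - b)⟫ - ‖t⁻¹ • (a - b)‖ ^ 2 := by
        simp only [he_def]
        rw [inner_sub_left, real_inner_self_eq_norm_sq]
      calc (1 / 2) * ‖w s‖ ^ 2 - R s
          = (1 / 2) * ‖e s + t⁻¹ • (a - b)‖ ^ 2 - R s := by rw [← h1]
        _ = (1 / 2) * (‖e s‖ ^ 2 + 2 * ⟪e s, t⁻¹ • (a - b)⟫
              + ‖t⁻¹ • (a - b)‖ ^ 2) - R s := by rw [norm_add_sq_real]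
        _ = _ := by rw [h2]; ring
    rw [intervalIntegral.integral_congr (g := fun s =>
        (((1 / 2) * ‖e s‖ ^ 2 + (⟪w s, t⁻¹ • (a - b)⟫ - (1 / 2) * ‖t⁻¹ • (a - b)‖ ^ 2))
          - R s)) (fun s _ => hpt s)]
    rw [intervalIntegral.integral_sub
      (f := fun s => (1 / 2) * ‖e s‖ ^ 2
        + (⟪w s, t⁻¹ • (a - b)⟫ - (1 / 2) * ‖t⁻¹ • (a - b)‖ ^ 2))
      (g := fun s => R s)
      (((continuous_const.mul (ce.norm.pow 2)).add
        ((cw.inner continuous_const).sub continuous_const)).intervalIntegrable 0 t)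
      (cR.intervalIntegrable 0 t),
      intervalIntegral.integral_add
      (f := fun s => (1 / 2) * ‖e s‖ ^ 2)
      (g := fun s => ⟪w s, t⁻¹ • (a - b)⟫ - (1 / 2) * ‖t⁻¹ • (a - b)‖ ^ 2)
      ((continuous_const.mul (ce.norm.pow 2)).intervalIntegrable 0 t)
      (((cw.inner continuous_const).sub continuous_const).intervalIntegrable 0 t),
      intervalIntegral.integral_sub
      (f := fun s => ⟪w s, t⁻¹ • (a - b)⟫)
      (g := fun _ => (1 / 2) * ‖t⁻¹ • (a - b)‖ ^ 2)
      ((cw.inner continuous_const).intervalIntegrable 0 t)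
      (continuous_const.intervalIntegrable 0 t),
      hwv, intervalIntegral.integral_const, intervalIntegral.integral_const_mul, hnv]
    have h2t : ((2:ℝ) * t)⁻¹ = t⁻¹ / 2 := by
      rw [mul_inv]; ring
    have hsm : (t - 0) • ((1:ℝ) / 2 * (t⁻¹ ^ 2 * ‖a - b‖ ^ 2))
        = (t - 0) * ((1:ℝ) / 2 * (t⁻¹ ^ 2 * ‖a - b‖ ^ 2)) := rfl
    rw [h2t, hsm]
    field_simp
    ring
  -- the remainder
  refine ⟨(∫ s in (0:ℝ)..t, R s) / t - (∫ s in (0:ℝ)..t, ‖e s‖ ^ 2) / (2 * t), ?_, ?_⟩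
  · -- the phase identity
    rw [hIh, hIS, hIC]
    have f1 : (⟪ξ, a⟫ : ℝ) = (inner ℝ x ξ : ℝ) - ⟪x', ξ⟫ := by
      rw [ha_def, inner_sub_right, real_inner_comm ξ x, real_inner_comm ξ x']
    have f2 : (⟪ξ2 0, b⟫ : ℝ) = (inner ℝ y (ξ2 0) : ℝ) - ⟪x2 0, ξ2 0⟫ := by
      rw [hb_def, inner_sub_right, real_inner_comm (ξ2 0) y, real_inner_comm (ξ2 0) (x2 0)]
    have f3 : t * ((∫ s in (0:ℝ)..t, R s) / t - (∫ s in (0:ℝ)..t, ‖e s‖ ^ 2) / (2 * t))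
        = (∫ s in (0:ℝ)..t, R s) - (∫ s in (0:ℝ)..t, ‖e s‖ ^ 2) / 2 := by
      field_simp
    linarith [f1, f2, f3]
  · -- the bound
    have hβt_t : β * t < π := lt_trans (mul_lt_mul_of_pos_left htT hβpos) hβT
    have hcos_t : c ≤ Real.cos (β * t / 2) := by
      rw [hc_def]
      have hbt : β * t ≤ β * T := mul_le_mul_of_nonneg_left htT.le hβpos.le
      exact Real.cos_le_cos_of_nonneg_of_le_pi (by positivity) (by linarith) (by linarith)
    have hcos_t_pos : 0 < Real.cos (β * t / 2) := lt_of_lt_of_le hcpos hcos_t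
    have hgwb : ∀ s ∈ Set.Icc (0:ℝ) t, ‖gw s‖ ≤ M * ‖z s‖ := by
      intro s _
      have h := hlip s (x2 s) (x1 s)
      have h2 : x2 s - x1 s = -(z s) := by simp only [hz_def]; abel
      rw [h2, norm_neg] at h
      exact h
    have hzB0 := sturm_bound hβpos ht0 hβt_t hM0 hMβ hzd hwd hgwb
    set Bc : ℝ := max ‖b‖ ‖a‖ / c with hBc_def
    have hBc0 : 0 ≤ Bc :=
      div_nonneg (le_trans (norm_nonneg b) (le_max_left _ _)) hcpos.le
    have hzB : ∀ s ∈ Set.Icc (0:ℝ) t, ‖z s‖ ≤ Bc := by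
      intro s hs
      refine le_trans (hzB0 s hs) ?_
      rw [hz0, hzt, hBc_def]
      exact div_le_div_of_nonneg_left
        (le_trans (norm_nonneg b) (le_max_left _ _)) hcpos hcos_t
    have hIocIcc : ∀ u ∈ Set.uIoc (0:ℝ) t, u ∈ Set.Icc (0:ℝ) t := by
      intro u hu
      rw [Set.uIoc_of_le ht0.le] at hu
      exact ⟨hu.1.le, hu.2⟩
    have habz : z t - z 0 = ∫ σ in (0:ℝ)..t, w σ := (ftc' hzd cw 0 t).symm
    have he_bound : ∀ s ∈ Set.Icc (0:ℝ) t, ‖e s‖ ≤ M * Bc * t := by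
      intro s hs
      have h1 : (t:ℝ) • w s - (a - b) = ∫ σ in (0:ℝ)..t, (w s - w σ) := by
        rw [intervalIntegral.integral_sub (continuous_const.intervalIntegrable 0 t)
          (cw.intervalIntegrable 0 t), intervalIntegral.integral_const, ← habz,
          hz0, hzt, sub_zero]
      have h2 : ∀ σ ∈ Set.uIoc (0:ℝ) t, ‖w s - w σ‖ ≤ M * Bc * t := by
        intro σ hσ
        have hσ' := hIocIcc σ hσ
        have h3 : w s - w σ = ∫ u in σ..s, gw u := by rw [ftc' hwd cgw σ s]
        rw [h3]
        have h4 : ∀ u ∈ Set.uIoc σ s, ‖gw u‖ ≤ M * Bc := by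
          intro u hu
          have hu' : u ∈ Set.Icc (0:ℝ) t := by
            constructor
            · exact le_of_lt (lt_of_le_of_lt (le_inf hσ'.1 hs.1) hu.1)
            · exact le_trans hu.2 (sup_le hσ'.2 hs.2)
          exact le_trans (hgwb u hu') (mul_le_mul_of_nonneg_left (hzB u hu') hM0)
        refine le_trans (intervalIntegral.norm_integral_le_of_norm_le_const h4) ?_
        have h5 : |s - σ| ≤ t :=
          abs_le.2 ⟨by linarith [hσ'.2, hs.1], by linarith [hσ'.1, hs.2]⟩
        have h6 : 0 ≤ M * Bc := mul_nonneg hM0 hBc0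
        exact mul_le_mul_of_nonneg_left h5 h6
      have h7 : e s = t⁻¹ • ((t:ℝ) • w s - (a - b)) := by
        rw [smul_sub, smul_smul, inv_mul_cancel₀ htne, one_smul]
      rw [h7, h1, norm_smul, Real.norm_eq_abs, abs_of_pos (inv_pos.2 ht0)]
      have h8 := intervalIntegral.norm_integral_le_of_norm_le_const h2
      rw [sub_zero, abs_of_pos ht0] at h8
      calc t⁻¹ * ‖∫ σ in (0:ℝ)..t, (w s - w σ)‖ ≤ t⁻¹ * (M * Bc * t * t) :=
            mul_le_mul_of_nonneg_left h8 (inv_pos.2 ht0).le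
        _ = M * Bc * t := by field_simp
    have hRb : ∀ s ∈ Set.uIoc (0:ℝ) t, ‖R s‖ ≤ M * Bc ^ 2 := by
      intro s hσ
      have hs' := hIocIcc s hσ
      rw [Real.norm_eq_abs]
      have h := htay s (x1 s) (x2 s)
      have hz' : x1 s - x2 s = z s := rfl
      rw [hz'] at h
      refine le_trans h ?_
      exact mul_le_mul_of_nonneg_left
        (pow_le_pow_left₀ (norm_nonneg _) (hzB s hs') 2) hM0
    have hIR : |∫ s in (0:ℝ)..t, R s| ≤ M * Bc ^ 2 * t := by
      have h := intervalIntegral.norm_integral_le_of_norm_le_const hRb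
      rw [sub_zero, abs_of_pos ht0, Real.norm_eq_abs] at h
      exact h
    have hIe : |∫ s in (0:ℝ)..t, ‖e s‖ ^ 2| ≤ (M * Bc * t) ^ 2 * t := by
      have hb2 : ∀ s ∈ Set.uIoc (0:ℝ) t, ‖(‖e s‖ ^ 2)‖ ≤ (M * Bc * t) ^ 2 := by
        intro s hσ
        have hs' := hIocIcc s hσ
        rw [Real.norm_eq_abs, abs_of_nonneg (by positivity)]
        exact pow_le_pow_left₀ (norm_nonneg _) (he_bound s hs') 2
      have h := intervalIntegral.norm_integral_le_of_norm_le_const hb2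
      rw [sub_zero, abs_of_pos ht0, Real.norm_eq_abs] at h
      exact h
    have hmax2 : (max ‖b‖ ‖a‖) ^ 2 ≤ ‖a‖ ^ 2 + ‖b‖ ^ 2 := max_sq_le
    have hBc2 : Bc ^ 2 ≤ (‖a‖ ^ 2 + ‖b‖ ^ 2) / c ^ 2 := by
      rw [hBc_def, div_pow]
      exact div_le_div_of_nonneg_right hmax2 (by positivity)
    have h2tpos : (0:ℝ) < 2 * t := by linarith
    have key : |(∫ s in (0:ℝ)..t, R s) / t - (∫ s in (0:ℝ)..t, ‖e s‖ ^ 2) / (2 * t)|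
        ≤ M * Bc ^ 2 + M ^ 2 * Bc ^ 2 * t ^ 2 / 2 := by
      have h1 : |(∫ s in (0:ℝ)..t, R s) / t| ≤ M * Bc ^ 2 := by
        rw [abs_div, abs_of_pos ht0, div_le_iff₀ ht0]
        exact hIR
      have h2 : |(∫ s in (0:ℝ)..t, ‖e s‖ ^ 2) / (2 * t)| ≤ M ^ 2 * Bc ^ 2 * t ^ 2 / 2 := by
        rw [abs_div, abs_of_pos h2tpos, div_le_iff₀ h2tpos]
        calc |∫ s in (0:ℝ)..t, ‖e s‖ ^ 2| ≤ (M * Bc * t) ^ 2 * t := hIe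
          _ = M ^ 2 * Bc ^ 2 * t ^ 2 / 2 * (2 * t) := by ring
      calc |(∫ s in (0:ℝ)..t, R s) / t - (∫ s in (0:ℝ)..t, ‖e s‖ ^ 2) / (2 * t)|
          ≤ |(∫ s in (0:ℝ)..t, R s) / t| + |(∫ s in (0:ℝ)..t, ‖e s‖ ^ 2) / (2 * t)| :=
            abs_sub _ _
        _ ≤ _ := add_le_add h1 h2
    exact le_trans key (arith_final hM0 hBc0 ht0 ht1 hcpos hBc2)
end

section
/- Let V satisfy the Assumption, let M = sup{|∂ₓ^α V(t,x)| : (t,x) ∈ ℝ^{1+n}, |α| = 2}, and fix 0 < T < min{1, π/√M}. For t ∈ (0,T) and x, y, x′, ξ ∈ ℝⁿ, let (x^{(1)}(s), ξ^{(1)}(s)) solve the Hamiltonian system with x^{(1)}(0) = y, x^{(1)}(t) = x, and let (x^{(2)}(s), ξ^{(2)}(s)) solve it with x^{(2)}(t) = x′, ξ^{(2)}(t) = ξ. Then ξ^{(1)}(0) − ξ^{(2)}(0) = ((x − x′) − (y − x^{(2)}(0)))/t + R₁(t,x,y,x′,ξ), where R₁(t,x,y,x′,ξ) = (1/t) ∫₀ᵗ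 ∫₀^{s′} { ∇ₓV(τ, x^{(1)}(τ)) − ∇ₓV(τ, x^{(2)}(τ)) } dτ ds′, and there exists C > 0 such that |R₁(t,x,y,x′,ξ)| ≤ C t ( |x − x′| + |y − x^{(2)}(0)| ) for all 0 < t < T and x, y, x′, ξ ∈ ℝⁿ. -/
open MeasureTheory Set
open scoped Real

theorem norm_fderiv_sub_le_of_norm_iteratedFDeriv_two_le {E F : Type*} [NormedAddCommGroup E]
    [NormedSpace ℝ E] [NormedAddCommGroup F] [NormedSpace ℝ F] {f : E → F} (hf : ContDiff ℝ 2 f)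
    {M : ℝ} (hM : ∀ x, ‖iteratedFDeriv ℝ 2 f x‖ ≤ M) (a b : E) :
    ‖fderiv ℝ f a - fderiv ℝ f b‖ ≤ M * ‖a - b‖ := by
  have hbound (x : E) : ‖fderiv ℝ (fderiv ℝ f) x‖ ≤ M := by
    rw [← norm_iteratedFDeriv_one, norm_iteratedFDeriv_fderiv]
    exact hM x
  exact convex_univ.norm_image_sub_le_of_norm_fderiv_le
    (fun x _ ↦ (hf.fderiv_right le_rfl).differentiable one_ne_zero x) (fun x _ ↦ hbound x)
    (mem_univ b) (mem_univ a)

section Gradient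

variable {E : Type*} [NormedAddCommGroup E] [InnerProductSpace ℝ E] [CompleteSpace E]

theorem norm_gradient_sub_le_of_norm_iteratedFDeriv_two_le {f : E → ℝ} (hf : ContDiff ℝ 2 f)
    {M : ℝ} (hM : ∀ x, ‖iteratedFDeriv ℝ 2 f x‖ ≤ M) (a b : E) :
    ‖gradient f a - gradient f b‖ ≤ M * ‖a - b‖ := by
  rw [gradient, gradient, ← map_sub, LinearIsometryEquiv.norm_map]
  exact norm_fderiv_sub_le_of_norm_iteratedFDeriv_two_le hf hM a b

theorem continuous_gradient_comp {V : ℝ → E → ℝ}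
    (hV : Continuous fun p : ℝ × E ↦ fderiv ℝ (V p.1) p.2) {z : ℝ → E} (hz : Continuous z) :
    Continuous fun s ↦ gradient (V s) (z s) :=
  (InnerProductSpace.toDual ℝ E).symm.continuous.comp (hV.comp (continuous_id.prodMk hz))

end Gradient

theorem strictConcaveOn_of_hasDerivAt_of_hasDerivAt {D : Set ℝ} (hD : Convex ℝ D)
    {f f' f'' : ℝ → ℝ} (hf : ∀ x, HasDerivAt f (f' x) x) (hf' : ∀ x, HasDerivAt f' (f'' x) x)
    (hneg : ∀ x ∈ interior D, f'' x < 0) : StrictConcaveOn ℝ D f := by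
  have hderiv : deriv f = f' := funext fun x ↦ (hf x).deriv
  refine strictConcaveOn_of_deriv2_neg hD (fun x _ ↦ (hf x).continuousAt.continuousWithinAt)
    fun x hx ↦ ?_
  rw [Function.iterate_succ_apply, Function.iterate_one, hderiv, (hf' x).deriv]
  exact hneg x hx

theorem cos_div_two_pos {x : ℝ} (h0 : 0 ≤ x) (hx : x < π) : 0 < Real.cos (x / 2) :=
  Real.cos_pos_of_mem_Ioo ⟨by linarith [Real.pi_pos], by linarith⟩

theorem cos_mul_half_le_cos_mul_sub_half {κ t T s : ℝ} (hκ : 0 ≤ κ) (hκT : κ * T ≤ π)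
    (htT : t ≤ T) (hs : s ∈ Icc 0 t) :
    Real.cos (κ * T / 2) ≤ Real.cos (κ * (s - t / 2)) := by
  have habs : |κ * (s - t / 2)| ≤ κ * T / 2 := by
    rw [abs_mul, abs_of_nonneg hκ]
    have : |s - t / 2| ≤ T / 2 := abs_le.2 ⟨by linarith [hs.1, hs.2], by linarith [hs.1, hs.2]⟩
    nlinarith
  have hκT0 : 0 ≤ κ * T := mul_nonneg hκ (hs.1.trans (hs.2.trans htT))
  rw [← Real.cos_abs (κ * (s - t / 2))]
  exact Real.cos_le_cos_of_nonneg_of_le_pi (abs_nonneg _) (by linarith) habs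

section Duhamel

variable {E : Type*} [NormedAddCommGroup E] [NormedSpace ℝ E]

theorem norm_integral_integral_le {G : ℝ → E} {B t : ℝ} (ht : 0 ≤ t)
    (hB : ∀ τ ∈ Icc 0 t, ‖G τ‖ ≤ B) :
    ‖∫ s in (0 : ℝ)..t, ∫ τ in (0 : ℝ)..s, G τ‖ ≤ B * t ^ 2 := by
  have hB0 : 0 ≤ B := (norm_nonneg _).trans (hB 0 ⟨le_rfl, ht⟩)
  have hinner : ∀ s ∈ uIoc 0 t, ‖∫ τ in (0 : ℝ)..s, G τ‖ ≤ B * t := by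
    intro s hs
    rw [uIoc_of_le ht] at hs
    calc ‖∫ τ in (0 : ℝ)..s, G τ‖ ≤ B * |s - 0| :=
          intervalIntegral.norm_integral_le_of_norm_le_const fun τ hτ ↦ by
            rw [uIoc_of_le hs.1.le] at hτ
            exact hB τ ⟨hτ.1.le, hτ.2.trans hs.2⟩
      _ ≤ B * t := by rw [sub_zero, abs_of_pos hs.1]; gcongr; exact hs.2
  calc ‖∫ s in (0 : ℝ)..t, ∫ τ in (0 : ℝ)..s, G τ‖ ≤ B * t * |t - 0| :=
        intervalIntegral.norm_integral_le_of_norm_le_const hinner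
    _ = B * t ^ 2 := by rw [sub_zero, abs_of_nonneg ht]; ring

variable [CompleteSpace E]

theorem sub_eq_smul_sub_integral_integral {u v G : ℝ → E} (hu : ∀ s, HasDerivAt u (v s) s)
    (hv : ∀ s, HasDerivAt v (-G s) s) (hG : Continuous G) (t : ℝ) :
    u t - u 0 = t • v 0 - ∫ s in (0 : ℝ)..t, ∫ τ in (0 : ℝ)..s, G τ := by
  have hv_eq (s : ℝ) : v s = v 0 - ∫ τ in (0 : ℝ)..s, G τ := by
    have h := intervalIntegral.integral_eq_sub_of_hasDerivAt (fun τ _ ↦ hv τ)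
      (hG.neg.intervalIntegrable 0 s)
    rw [intervalIntegral.integral_neg, neg_eq_iff_eq_neg] at h
    rw [h]
    abel
  have hvc : Continuous v := continuous_iff_continuousAt.2 fun s ↦ (hv s).continuousAt
  have hprim : Continuous fun s ↦ ∫ τ in (0 : ℝ)..s, G τ :=
    intervalIntegral.continuous_primitive (fun a b ↦ hG.intervalIntegrable a b) 0
  rw [← intervalIntegral.integral_eq_sub_of_hasDerivAt (fun s _ ↦ hu s)
      (hvc.intervalIntegrable 0 t), intervalIntegral.integral_congr fun s _ ↦ hv_eq s,
    intervalIntegral.integral_sub intervalIntegrable_const (hprim.intervalIntegrable 0 t),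
    intervalIntegral.integral_const, sub_zero]

end Duhamel

section ComparisonPrinciple

variable {E : Type*} [NormedAddCommGroup E] [InnerProductSpace ℝ E]

theorem norm_div_le_max_of_strict_supersolution {u v a : ℝ → E} {c c' c'' : ℝ → ℝ} {M t : ℝ}
    (hM : 0 ≤ M) (ht : 0 ≤ t) (hu : ∀ s, HasDerivAt u (v s) s) (hv : ∀ s, HasDerivAt v (a s) s)
    (hc : ∀ s, HasDerivAt c (c' s) s) (hc' : ∀ s, HasDerivAt c' (c'' s) s)
    (hc_pos : ∀ s ∈ Icc 0 t, 0 < c s) (hc_super : ∀ s ∈ Ioo 0 t, c'' s + M * c s < 0)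
    (ha : ∀ s ∈ Ioo 0 t, ‖a s‖ ≤ M * ‖u s‖) {s : ℝ} (hs : s ∈ Icc 0 t) :
    ‖u s‖ / c s ≤ max (‖u 0‖ / c 0) (‖u t‖ / c t) := by
  set ψ : ℝ → ℝ := fun s ↦ ‖u s‖ / c s
  have hψ_cont : ContinuousOn ψ (Icc 0 t) :=
    (continuous_iff_continuousAt.2 fun s ↦ (hu s).continuousAt).norm.continuousOn.div
      (continuous_iff_continuousAt.2 fun s ↦ (hc s).continuousAt).continuousOn
      fun s hs ↦ (hc_pos s hs).ne'
  obtain ⟨s₀, hs₀, hmax⟩ := isCompact_Icc.exists_isMaxOn (nonempty_Icc.2 ht) hψ_cont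
  refine (hmax hs).trans (le_of_not_gt fun hlt ↦ ?_)
  rw [max_lt_iff] at hlt
  set ψ₀ := ψ s₀
  have hψ₀ : 0 < ψ₀ := (div_nonneg (norm_nonneg _) (hc_pos 0 ⟨le_rfl, ht⟩).le).trans_lt hlt.1
  have hs₀' : s₀ ∈ Ioo 0 t :=
    ⟨hs₀.1.lt_of_ne (by rintro rfl; exact lt_irrefl _ hlt.1),
      hs₀.2.lt_of_ne (by rintro rfl; exact lt_irrefl _ hlt.2)⟩
  have hu_le (x : ℝ) (hx : x ∈ Icc 0 t) : ‖u x‖ ≤ ψ₀ * c x :=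
    (div_le_iff₀ (hc_pos x hx)).1 (hmax hx)
  have hu₀ : ‖u s₀‖ = ψ₀ * c s₀ := (div_mul_cancel₀ _ (hc_pos s₀ hs₀).ne').symm
  have hu₀_pos : 0 < ‖u s₀‖ := hu₀ ▸ mul_pos hψ₀ (hc_pos s₀ hs₀)
  set e := ‖u s₀‖⁻¹ • u s₀
  have he : ‖e‖ = 1 := by simp [e, norm_smul, hu₀_pos.ne']
  -- `ψ₀ c ≥ ‖u‖ ≥ ⟪e, u⟫` on `[0, t]` with equality at the interior point `s₀`,
  -- but `ψ₀ c - ⟪e, u⟫` is strictly concave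
  set w : ℝ → ℝ := fun x ↦ ψ₀ * c x - inner ℝ e (u x)
  have hw_nonneg (x : ℝ) (hx : x ∈ Icc 0 t) : 0 ≤ w x := by
    have := real_inner_le_norm e (u x)
    rw [he, one_mul] at this
    linarith [hu_le x hx]
  have hw₀ : w s₀ = 0 := by
    simp only [w, e, real_inner_smul_left, real_inner_self_eq_norm_mul_norm, ← hu₀]
    field_simp
    ring
  have hw_conc : StrictConcaveOn ℝ (Icc 0 t) w := by
    refine strictConcaveOn_of_hasDerivAt_of_hasDerivAt
      (f'' := fun x ↦ ψ₀ * c'' x - inner ℝ e (a x)) (convex_Icc 0 t)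
      (fun x ↦ ((hc x).const_mul ψ₀).sub ((innerSL ℝ e).hasFDerivAt.comp_hasDerivAt x (hu x)))
      (fun x ↦ ((hc' x).const_mul ψ₀).sub ((innerSL ℝ e).hasFDerivAt.comp_hasDerivAt x (hv x)))
      fun x hx ↦ ?_
    rw [interior_Icc] at hx
    have h_inner : -‖a x‖ ≤ inner ℝ e (a x) := by
      have := abs_real_inner_le_norm e (a x)
      rw [he, one_mul] at this
      exact (abs_le.1 this).1
    have hMu : M * ‖u x‖ ≤ M * (ψ₀ * c x) := by gcongr; exact hu_le x (Ioo_subset_Icc_self hx)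
    nlinarith [ha x hx, hc_super x hx]
  have h_open : s₀ ∈ openSegment ℝ 0 t := by rwa [openSegment_eq_Ioo (hs₀'.1.trans hs₀'.2)]
  have := hw_conc.lt_on_openSegment (left_mem_Icc.2 ht) (right_mem_Icc.2 ht)
    (hs₀'.1.trans hs₀'.2).ne h_open
  rw [hw₀, min_lt_iff] at this
  rcases this with h | h
  · exact h.not_ge (hw_nonneg 0 (left_mem_Icc.2 ht))
  · exact h.not_ge (hw_nonneg t (right_mem_Icc.2 ht))

theorem norm_le_inv_cos_mul_of_norm_deriv_two_le {u v a : ℝ → E} {M κ t T : ℝ} (hM : 0 ≤ M)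
    (hκ : 0 < κ) (hκT : κ * T < π) (hMκ : M < κ ^ 2) (ht : 0 ≤ t) (htT : t ≤ T)
    (hu : ∀ s, HasDerivAt u (v s) s) (hv : ∀ s, HasDerivAt v (a s) s)
    (ha : ∀ s ∈ Ioo 0 t, ‖a s‖ ≤ M * ‖u s‖) {s : ℝ} (hs : s ∈ Icc 0 t) :
    ‖u s‖ ≤ (Real.cos (κ * T / 2))⁻¹ * (‖u 0‖ + ‖u t‖) := by
  set δ := Real.cos (κ * T / 2)
  have hδ : 0 < δ := cos_div_two_pos (mul_nonneg hκ.le (ht.trans htT)) hκT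
  set c : ℝ → ℝ := fun s ↦ Real.cos (κ * (s - t / 2))
  have hδc (s : ℝ) (hs : s ∈ Icc 0 t) : δ ≤ c s :=
    cos_mul_half_le_cos_mul_sub_half hκ.le hκT.le htT hs
  have hθ (s : ℝ) : HasDerivAt (fun s ↦ κ * (s - t / 2)) κ s := by
    simpa using ((hasDerivAt_id s).sub_const (t / 2)).const_mul κ
  have hc (s : ℝ) : HasDerivAt c (-κ * Real.sin (κ * (s - t / 2))) s :=
    ((Real.hasDerivAt_cos _).comp s (hθ s)).congr_deriv (by ring)
  have hc' (s : ℝ) :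
      HasDerivAt (fun s ↦ -κ * Real.sin (κ * (s - t / 2))) (-κ ^ 2 * c s) s :=
    (((Real.hasDerivAt_sin _).comp s (hθ s)).const_mul (-κ)).congr_deriv (by ring)
  have hc_pos (s : ℝ) (hs : s ∈ Icc 0 t) : 0 < c s := hδ.trans_le (hδc s hs)
  have hmax := norm_div_le_max_of_strict_supersolution hM ht hu hv hc hc' hc_pos
    (fun s hs ↦ by nlinarith [hc_pos s (Ioo_subset_Icc_self hs)]) ha hs
  have hend (r : ℝ) (hr : r ∈ Icc 0 t) (hur : ‖u r‖ ≤ ‖u 0‖ + ‖u t‖) :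
      ‖u r‖ / c r ≤ δ⁻¹ * (‖u 0‖ + ‖u t‖) := by
    rw [← div_eq_inv_mul]
    exact (div_le_div_of_nonneg_left (norm_nonneg _) hδ (hδc r hr)).trans (by gcongr)
  calc ‖u s‖ = ‖u s‖ / c s * c s := (div_mul_cancel₀ _ (hc_pos s hs).ne').symm
    _ ≤ ‖u s‖ / c s := mul_le_of_le_one_right (div_nonneg (norm_nonneg _) (hc_pos s hs).le)
        (Real.cos_le_one _)
    _ ≤ δ⁻¹ * (‖u 0‖ + ‖u t‖) :=
      hmax.trans (max_le (hend 0 (left_mem_Icc.2 ht) (le_add_of_nonneg_right (norm_nonneg _)))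
        (hend t (right_mem_Icc.2 ht) (le_add_of_nonneg_left (norm_nonneg _))))

end ComparisonPrinciple

theorem exists_pos_mul_lt_pi_and_lt_sq {M T : ℝ} (hT : 0 < T) (hTM : T * √M < π) :
    ∃ κ > 0, κ * T < π ∧ M < κ ^ 2 := by
  -- `κ T` is the midpoint of `T √M` and `π`
  refine ⟨(π + T * √M) / (2 * T), by positivity, ?_, Real.lt_sq_of_sqrt_lt ?_⟩
  · rw [div_mul_eq_mul_div, div_lt_iff₀ (by positivity)]
    nlinarith
  · rw [lt_div_iff₀ (by positivity)]
    nlinarith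

theorem hamiltonian_difference_remainder {E : Type*} [NormedAddCommGroup E] [InnerProductSpace ℝ E]
    [CompleteSpace E] {u v G : ℝ → E} {M κ t T : ℝ} (hM : 0 ≤ M) (hκ : 0 < κ)
    (hκT : κ * T < π) (hMκ : M < κ ^ 2) (ht : 0 < t) (htT : t ≤ T)
    (hu : ∀ s, HasDerivAt u (v s) s) (hv : ∀ s, HasDerivAt v (-G s) s) (hG : Continuous G)
    (hGu : ∀ s, ‖G s‖ ≤ M * ‖u s‖) :
    v 0 = t⁻¹ • (u t - u 0) + t⁻¹ • ∫ s in (0 : ℝ)..t, ∫ τ in (0 : ℝ)..s, G τ ∧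
      ‖t⁻¹ • ∫ s in (0 : ℝ)..t, ∫ τ in (0 : ℝ)..s, G τ‖ ≤
        M * (Real.cos (κ * T / 2))⁻¹ * t * (‖u t‖ + ‖u 0‖) := by
  constructor
  · rw [sub_eq_smul_sub_integral_integral hu hv hG t, smul_sub, inv_smul_smul₀ ht.ne',
      sub_add_cancel]
  · have hB (τ : ℝ) (hτ : τ ∈ Icc 0 t) :
        ‖G τ‖ ≤ M * ((Real.cos (κ * T / 2))⁻¹ * (‖u 0‖ + ‖u t‖)) := by
      have hu_le := norm_le_inv_cos_mul_of_norm_deriv_two_le hM hκ hκT hMκ ht.le htT hu hv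
        (fun s _ ↦ by rw [norm_neg]; exact hGu s) hτ
      exact (hGu τ).trans (by gcongr)
    rw [norm_smul, norm_inv, Real.norm_of_nonneg ht.le]
    calc t⁻¹ * ‖∫ s in (0 : ℝ)..t, ∫ τ in (0 : ℝ)..s, G τ‖
        ≤ t⁻¹ * (M * ((Real.cos (κ * T / 2))⁻¹ * (‖u 0‖ + ‖u t‖)) * t ^ 2) := by
          gcongr; exact norm_integral_integral_le ht.le hB
      _ = M * (Real.cos (κ * T / 2))⁻¹ * t * (‖u t‖ + ‖u 0‖) := by field_simp; ring

theorem stmt_15_general (n : ℕ) (V : ℝ → EuclideanSpace ℝ (Fin n) → ℝ) (hV : PotAssumption n V)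
    (M : ℝ)
    (hM : M = ⨆ p : ℝ × EuclideanSpace ℝ (Fin n), ‖iteratedFDeriv ℝ 2 (V p.1) p.2‖)
    (T : ℝ) (hT : 0 < T) (hTM : T * Real.sqrt M < π) :
    ∃ C > 0, ∀ t ∈ Set.Ioo (0 : ℝ) T, ∀ x y x' ξ : EuclideanSpace ℝ (Fin n),
      ∀ x1 ξ1 x2 ξ2 : ℝ → EuclideanSpace ℝ (Fin n),
        (∀ s, HasDerivAt x1 (ξ1 s) s ∧ HasDerivAt ξ1 (-(gradient (V s) (x1 s))) s) →
        x1 0 = y → x1 t = x →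
        (∀ s, HasDerivAt x2 (ξ2 s) s ∧ HasDerivAt ξ2 (-(gradient (V s) (x2 s))) s) →
        x2 t = x' → ξ2 t = ξ →
        (ξ1 0 - ξ2 0 = t⁻¹ • ((x - x') - (y - x2 0)) +
            t⁻¹ • ∫ s' in (0 : ℝ)..t,
              (∫ τ in (0 : ℝ)..s', (gradient (V τ) (x1 τ) - gradient (V τ) (x2 τ)))) ∧
          ‖t⁻¹ • ∫ s' in (0 : ℝ)..t,
              (∫ τ in (0 : ℝ)..s', (gradient (V τ) (x1 τ) - gradient (V τ) (x2 τ)))‖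
            ≤ C * t * (‖x - x'‖ + ‖y - x2 0‖) := by
  obtain ⟨hV_C2, -, hV_fderiv, -, K, -, hK⟩ := hV
  have hbdd : BddAbove (Set.range fun p : ℝ × EuclideanSpace ℝ (Fin n) ↦
      ‖iteratedFDeriv ℝ 2 (V p.1) p.2‖) := ⟨K, by rintro _ ⟨p, rfl⟩; exact hK p.1 p.2⟩
  have hMV (s : ℝ) (z : EuclideanSpace ℝ (Fin n)) : ‖iteratedFDeriv ℝ 2 (V s) z‖ ≤ M := by
    rw [hM]; exact le_ciSup hbdd (s, z)
  have hM0 : 0 ≤ M := (norm_nonneg _).trans (hMV 0 0)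
  obtain ⟨κ, hκ, hκT, hMκ⟩ := exists_pos_mul_lt_pi_and_lt_sq hT hTM
  have hδ : 0 < Real.cos (κ * T / 2) := cos_div_two_pos (mul_nonneg hκ.le hT.le) hκT
  refine ⟨(M + 1) * (Real.cos (κ * T / 2))⁻¹, by positivity, ?_⟩
  rintro t ⟨ht, htT⟩ x y x' ξ x1 ξ1 x2 ξ2 h1 rfl rfl h2 rfl -
  have hx1 : Continuous x1 := continuous_iff_continuousAt.2 fun s ↦ (h1 s).1.continuousAt
  have hx2 : Continuous x2 := continuous_iff_continuousAt.2 fun s ↦ (h2 s).1.continuousAt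
  obtain ⟨h_eq, h_le⟩ := hamiltonian_difference_remainder (u := fun s ↦ x1 s - x2 s)
    (G := fun τ ↦ gradient (V τ) (x1 τ) - gradient (V τ) (x2 τ)) hM0 hκ hκT hMκ ht htT.le
    (fun s ↦ (h1 s).1.sub (h2 s).1)
    (fun s ↦ ((h1 s).2.sub (h2 s).2).congr_deriv (by abel))
    ((continuous_gradient_comp hV_fderiv hx1).sub (continuous_gradient_comp hV_fderiv hx2))
    (fun s ↦ norm_gradient_sub_le_of_norm_iteratedFDeriv_two_le (hV_C2 s) (hMV s) _ _)
  refine ⟨h_eq, h_le.trans ?_⟩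
  gcongr
  linarith

/-- Under the Assumption, with `M = sup |∂ₓ²V|` and
`0 < T < min{1, π/√M}`, whenever `(x⁽¹⁾, ξ⁽¹⁾)` solves the Hamiltonian system with
`x⁽¹⁾(0) = y`, `x⁽¹⁾(t) = x` and `(x⁽²⁾, ξ⁽²⁾)` solves it with `x⁽²⁾(t) = x′`,
`ξ⁽²⁾(t) = ξ`, one has
`ξ⁽¹⁾(0) − ξ⁽²⁾(0) = ((x − x′) − (y − x⁽²⁾(0)))/t + R₁` with
`R₁ = (1/t)∫₀ᵗ∫₀^{s′} {∇ₓV(τ,x⁽¹⁾(τ)) − ∇ₓV(τ,x⁽²⁾(τ))} dτ ds′`, and there is `C > 0`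
with `|R₁| ≤ C t (|x − x′| + |y − x⁽²⁾(0)|)` for all `0 < t < T`. -/
theorem stmt_15 (n : ℕ) (V : ℝ → EuclideanSpace ℝ (Fin n) → ℝ) (hV : PotAssumption n V)
    (M : ℝ)
    (hM : M = ⨆ p : ℝ × EuclideanSpace ℝ (Fin n), ‖iteratedFDeriv ℝ 2 (V p.1) p.2‖)
    (T : ℝ) (hT : 0 < T) (hT1 : T < 1) (hTM : T * Real.sqrt M < π) :
    ∃ C > 0, ∀ t ∈ Set.Ioo (0 : ℝ) T, ∀ x y x' ξ : EuclideanSpace ℝ (Fin n),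
      ∀ x1 ξ1 x2 ξ2 : ℝ → EuclideanSpace ℝ (Fin n),
        (∀ s, HasDerivAt x1 (ξ1 s) s ∧ HasDerivAt ξ1 (-(gradient (V s) (x1 s))) s) →
        x1 0 = y → x1 t = x →
        (∀ s, HasDerivAt x2 (ξ2 s) s ∧ HasDerivAt ξ2 (-(gradient (V s) (x2 s))) s) →
        x2 t = x' → ξ2 t = ξ →
        (ξ1 0 - ξ2 0 = t⁻¹ • ((x - x') - (y - x2 0)) +
            t⁻¹ • ∫ s' in (0 : ℝ)..t,
              (∫ τ in (0 : ℝ)..s', (gradient (V τ) (x1 τ) - gradient (V τ) (x2 τ)))) ∧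
          ‖t⁻¹ • ∫ s' in (0 : ℝ)..t,
              (∫ τ in (0 : ℝ)..s', (gradient (V τ) (x1 τ) - gradient (V τ) (x2 τ)))‖
            ≤ C * t * (‖x - x'‖ + ‖y - x2 0‖) :=
  stmt_15_general n V hV M hM T hT hTM
end
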